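/- arXiv:2002.06164 — 6 statements merged into one kernel-verified Lean document; each statement's English description precedes it below -/
import Mathlib

section
/- Let π be a loopless decorated permutation on [n] (i.e. π has no fixed points designated as loops and no plain fixed points other than coloops; in particular π(i) ≠ i unless i is a coloop, and there are no loops) with exactly k+1 anti-excedances, where an anti-excedance is a position i with π(i) < i or a coloop fixed point. Define π̂ by π̂(i) = π(i−1) (indices mod n), declaring any fixed points of π̂ to be loops. Then π̂ is a coloopless decorated permutation on [n] with exactly k anti-excedances, and the map π ↦ π̂ is a bijection from loopless decorated permutations on [n] with k+1 anti-excedances to coloopless decorated permutations on [n] with k anti-excedances. -/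
/-- A decorated permutation on `[n]`: a permutation of `Fin n` together with a
colouring of its fixed points; `coloop i = true` means `i` is a white fixed point
(coloop), and a fixed point with `coloop i = false` is a black fixed point (loop).
Non-fixed points are required to be uncoloured (`false`). -/
structure DecoratedPerm (n : ℕ) where
  perm : Equiv.Perm (Fin n)
  coloop : Fin n → Bool
  coloop_fixed : ∀ i, coloop i = true → perm i = i

namespace DecoratedPerm

variable {n : ℕ}

/-- The number of anti-excedances of a decorated permutation: positions `i` with
`π⁻¹(i) > i`, or fixed points coloured as coloops. -/
def antiExcCount (π : DecoratedPerm n) : ℕ :=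
  (Finset.univ.filter fun i : Fin n =>
    i < π.perm.symm i ∨ (π.perm i = i ∧ π.coloop i = true)).card

/-- `π` is loopless: every fixed point is a coloop (no black fixed points). -/
def Loopless (π : DecoratedPerm n) : Prop := ∀ i, π.perm i = i → π.coloop i = true

/-- `π` is coloopless: no white fixed points. -/
def Coloopless (π : DecoratedPerm n) : Prop := ∀ i, π.perm i = i → π.coloop i = false

/-- The T-duality map: `π̂(i) = π(i − 1)` (indices mod `n`), with all fixed points
of `π̂` declared to be loops. -/
def Tdual [NeZero n] (π : DecoratedPerm n) : DecoratedPerm n where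
  perm := (Equiv.subRight (1 : Fin n)).trans π.perm
  coloop := fun _ => false
  coloop_fixed := by intro i h; simp at h

end DecoratedPerm

/-! Write `π` for the permutation and `ℓ = n - 1` for the last position. For loopless `π`, a position
`i` is an anti-excedance iff `i ≤ π⁻¹ i`; reindexing by `j = π⁻¹ i` counts the `j` with `π j ≤ j`.
Since `π̂⁻¹ i = π⁻¹ i + 1` and `π̂` has no coloops, the anti-excedances of `π̂` correspond to the `j`
with `π j < j + 1`. Away from `j = ℓ` the two conditions agree; at `j = ℓ` the first always holds
and the second never does, because `ℓ + 1 = 0` wraps around. So T-duality lowers the count by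
exactly one. It is inverted by `σ ↦ σ(· + 1)` with every fixed point declared a coloop, since the
decoration of a loopless or coloopless decorated permutation is determined by its permutation. -/

open Finset

theorem Fin.card_filter_le_eq_card_filter_lt_add_one_add_one {m : ℕ}
    (f : Fin (m + 1) → Fin (m + 1)) :
    #{j | f j ≤ j} = #{j | f j < j + 1} + 1 := by
  have h_split : univ.filter (fun j => f j ≤ j) =
      insert (Fin.last m) (univ.filter fun j => f j < j + 1) := by
    ext j
    simp only [mem_filter, mem_univ, true_and, mem_insert]
    rcases eq_or_ne j (Fin.last m) with rfl | hj
    · simp [Fin.le_last]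
    · rw [Fin.lt_def, Fin.le_def, Fin.val_add_one_of_lt (Fin.lt_last_iff_ne_last.2 hj)]
      simp only [hj, false_or]
      omega
  rw [h_split, card_insert_of_notMem (by simp)]

namespace DecoratedPerm

variable {n : ℕ}

theorem ext {π σ : DecoratedPerm n} (hperm : π.perm = σ.perm) (hcoloop : π.coloop = σ.coloop) :
    π = σ := by
  cases π; cases σ; congr

theorem coloop_eq_of_not_fixed (π : DecoratedPerm n) {i : Fin n} (hi : π.perm i ≠ i) :
    π.coloop i = false :=
  Bool.eq_false_iff.2 fun h => hi (π.coloop_fixed i h)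

theorem Loopless.coloop_eq {π : DecoratedPerm n} (hπ : π.Loopless) (i : Fin n) :
    π.coloop i = decide (π.perm i = i) := by
  by_cases hi : π.perm i = i
  · simp [hi, hπ i hi]
  · simp [hi, π.coloop_eq_of_not_fixed hi]

theorem Coloopless.coloop_eq {π : DecoratedPerm n} (hπ : π.Coloopless) (i : Fin n) :
    π.coloop i = false := by
  by_cases hi : π.perm i = i
  · exact hπ i hi
  · exact π.coloop_eq_of_not_fixed hi

theorem Loopless.antiExcCount_eq {π : DecoratedPerm n} (hπ : π.Loopless) :
    π.antiExcCount = #{j | π.perm j ≤ j} := by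
  refine card_equiv π.perm.symm fun i => ?_
  simp only [mem_filter, mem_univ, true_and, Equiv.apply_symm_apply]
  constructor
  · rintro (hlt | ⟨hfix, -⟩)
    · exact hlt.le
    · exact (π.perm.symm_apply_eq.2 hfix.symm).ge
  · intro hle
    rcases hle.eq_or_lt with heq | hlt
    · have hfix : π.perm i = i := π.perm.eq_symm_apply.1 heq
      exact Or.inr ⟨hfix, hπ i hfix⟩
    · exact Or.inl hlt

section Tdual

variable [NeZero n]

theorem antiExcCount_tdual (π : DecoratedPerm n) :
    (Tdual π).antiExcCount = #{j | π.perm j < j + 1} := by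
  refine card_equiv π.perm.symm fun i => ?_
  simp [Tdual]

theorem coloopless_tdual (π : DecoratedPerm n) : (Tdual π).Coloopless :=
  fun _ _ => rfl

theorem Loopless.antiExcCount_eq_antiExcCount_tdual_add_one {π : DecoratedPerm n}
    (hπ : π.Loopless) : π.antiExcCount = (Tdual π).antiExcCount + 1 := by
  obtain ⟨m, rfl⟩ := Nat.exists_eq_add_one_of_ne_zero (NeZero.ne n)
  rw [hπ.antiExcCount_eq, antiExcCount_tdual]
  exact Fin.card_filter_le_eq_card_filter_lt_add_one_add_one π.perm

def untdual (σ : DecoratedPerm n) : DecoratedPerm n where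
  perm := (Equiv.addRight 1).trans σ.perm
  coloop i := decide (σ.perm (i + 1) = i)
  coloop_fixed _ h := of_decide_eq_true h

theorem loopless_untdual (σ : DecoratedPerm n) : (untdual σ).Loopless :=
  fun _ h => decide_eq_true h

theorem Loopless.untdual_tdual {π : DecoratedPerm n} (hπ : π.Loopless) : untdual (Tdual π) = π :=
  ext (by ext i; simp [untdual, Tdual]) (by funext i; simp [untdual, Tdual, hπ.coloop_eq])

theorem Coloopless.tdual_untdual {σ : DecoratedPerm n} (hσ : σ.Coloopless) : Tdual (untdual σ) = σ :=
  ext (by ext i; simp [untdual, Tdual]) (by funext i; simp [Tdual, hσ.coloop_eq])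

end Tdual

end DecoratedPerm

/-- **T-duality is a bijection** from loopless decorated permutations on `[n]` with
`k+1` anti-excedances to coloopless decorated permutations on `[n]` with `k`
anti-excedances. -/
theorem tduality_bijection (n k : ℕ) [NeZero n] :
    Set.BijOn (DecoratedPerm.Tdual : DecoratedPerm n → DecoratedPerm n)
      {π : DecoratedPerm n | π.Loopless ∧ π.antiExcCount = k + 1}
      {π : DecoratedPerm n | π.Coloopless ∧ π.antiExcCount = k} := by
  refine Set.InvOn.bijOn (f' := DecoratedPerm.untdual) ⟨fun π hπ => hπ.1.untdual_tdual,
    fun σ hσ => hσ.1.tdual_untdual⟩ ?_ ?_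
  · rintro π ⟨hπ, hcount⟩
    refine ⟨π.coloopless_tdual, ?_⟩
    have := hπ.antiExcCount_eq_antiExcCount_tdual_add_one
    omega
  · rintro σ ⟨hσ, hcount⟩
    refine ⟨σ.loopless_untdual, ?_⟩
    rw [σ.loopless_untdual.antiExcCount_eq_antiExcCount_tdual_add_one, hσ.tdual_untdual, hcount]
end

section
/- A nonempty collection B of k-element subsets of [n] is the set of bases of a matroid if and only if every edge (1-dimensional face) of the polytope conv{e_B : B ∈ B} ⊂ ℝⁿ is a parallel translate of e_i − e_j for some i, j ∈ [n]. -/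
open scoped BigOperators

/-- The indicator (characteristic) vector `e_B ∈ ℝⁿ` of a subset `B ⊆ [n]`. -/
noncomputable def ind (n : ℕ) (B : Finset (Fin n)) : Fin n → ℝ :=
  fun i => if i ∈ B then 1 else 0

/-- The polytope `Γ_𝓑 = conv{e_B : B ∈ 𝓑} ⊆ ℝⁿ`. -/
noncomputable def polytopeOf (n : ℕ) (𝓑 : Finset (Finset (Fin n))) : Set (Fin n → ℝ) :=
  convexHull ℝ (ind n '' ↑𝓑)

/-- `F` is a face of `P`: the set of maximizers in `P` of some linear functional. -/
def IsFaceOf (n : ℕ) (P F : Set (Fin n → ℝ)) : Prop :=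
  ∃ w : Fin n → ℝ, F = {x ∈ P | ∀ y ∈ P, ∑ i, w i * y i ≤ ∑ i, w i * x i}

/-- The basis exchange axiom for a collection of subsets of `[n]`. -/
def ExchangeAxiom (n : ℕ) (𝓑 : Finset (Finset (Fin n))) : Prop :=
  ∀ B₁ ∈ 𝓑, ∀ B₂ ∈ 𝓑, ∀ x ∈ B₁ \ B₂, ∃ y ∈ B₂ \ B₁, insert y (B₁.erase x) ∈ 𝓑

/-!
A face of `Γ_𝓑` is the convex hull of the vertices `e_D` maximizing some weight `w`.

If `𝓑` satisfies the exchange axiom and `A ≠ B` both maximize `w`, exchanging a `w`-lightest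
`a ∈ A \ B` for some `b ∈ B \ A` yields a `w`-maximal basis `A - a + b`; so a one-dimensional face
is parallel to `e_b - e_a`.

Conversely, given bases `A`, `B` and `x ∈ A \ B`, let `C ⊆ A ∪ B` be a basis avoiding `x` with
`#(A \ C)` minimal. An explicit weight exposes `[e_A, e_C]` as an edge; if it is parallel to some
`e_i - e_j` then `#(A \ C) = 1`, i.e. `C = A - x + y` with `y ∈ B \ A`.
-/

theorem convexHull_inter_hyperplane_of_le {𝕜 E : Type*} [Field 𝕜] [LinearOrder 𝕜]
    [IsStrictOrderedRing 𝕜] [AddCommGroup E] [Module 𝕜 E] (l : E →ₗ[𝕜] 𝕜) {s : Set E} {μ : 𝕜}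
    (hs : ∀ y ∈ s, l y ≤ μ) :
    convexHull 𝕜 s ∩ {x | l x = μ} = convexHull 𝕜 (s ∩ {x | l x = μ}) := by
  refine subset_antisymm ?_ <| convexHull_min
    (Set.inter_subset_inter_left _ (subset_convexHull 𝕜 s))
    ((convex_convexHull 𝕜 s).inter (convex_hyperplane l.isLinear μ))
  rintro _ ⟨hx, hlx⟩
  rw [convexHull_eq] at hx
  obtain ⟨ι, t, w, z, hw₀, hw₁, hz, rfl⟩ := hx
  -- a convex combination attains the upper bound `μ` only through points where `l = μ`
  have hlz : ∀ i ∈ t, w i ≠ 0 → l (z i) = μ := by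
    have hsum : ∑ i ∈ t, w i * (μ - l (z i)) = 0 := by
      simp only [Set.mem_ofPred_eq, Finset.centerMass_eq_of_sum_1 _ _ hw₁, map_sum,
        map_smul, smul_eq_mul] at hlx
      simp only [mul_sub, Finset.sum_sub_distrib, ← Finset.sum_mul, hw₁, one_mul, hlx, sub_self]
    intro i hi hwi
    have := (Finset.sum_eq_zero_iff_of_nonneg fun j hj =>
      mul_nonneg (hw₀ j hj) (sub_nonneg.2 (hs _ (hz j hj)))).1 hsum i hi
    rcases mul_eq_zero.1 this with h | h
    · exact absurd h hwi
    · linarith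
  rw [← Finset.centerMass_filter_ne_zero]
  refine Finset.centerMass_mem_convexHull _ (fun i hi => hw₀ i (Finset.mem_filter.1 hi).1) ?_
    fun i hi => ?_
  · rw [Finset.sum_filter_ne_zero, hw₁]
    exact one_pos
  · obtain ⟨hi, hwi⟩ := Finset.mem_filter.1 hi
    exact ⟨hz i hi, hlz i hi hwi⟩

open Finset

section Cardinality

variable {α : Type*} [DecidableEq α] {A C D : Finset α}

theorem card_inter_add_card_inter (A C D : Finset α) :
    #(A ∩ D) + #(C ∩ D) = #((A ∪ C) ∩ D) + #(A ∩ C ∩ D) := by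
  rw [union_inter_distrib_right, inter_inter_distrib_right, card_union_add_card_inter]

theorem card_inter_add_card_inter_of_subset (hAC : A ∩ C ⊆ D) (hD : D ⊆ A ∪ C) :
    #(A ∩ D) + #(C ∩ D) = #D + #(A ∩ C) := by
  rw [card_inter_add_card_inter, inter_eq_right.2 hD, inter_eq_left.2 hAC]

theorem card_inter_add_card_inter_lt (h : ¬(A ∩ C ⊆ D ∧ D ⊆ A ∪ C)) :
    #(A ∩ D) + #(C ∩ D) < #D + #(A ∩ C) := by
  rw [card_inter_add_card_inter]
  have h₁ : #((A ∪ C) ∩ D) ≤ #D := card_le_card inter_subset_right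
  have h₂ : #(A ∩ C ∩ D) ≤ #(A ∩ C) := card_le_card inter_subset_left
  rcases not_and_or.1 h with h | h
  · have : #(A ∩ C ∩ D) < #(A ∩ C) :=
      card_lt_card ⟨inter_subset_left, fun h' => h (h'.trans inter_subset_right)⟩
    omega
  · have : #((A ∪ C) ∩ D) < #D :=
      card_lt_card ⟨inter_subset_right, fun h' => h (h'.trans inter_subset_left)⟩
    omega

theorem sdiff_nonempty_of_card_eq (h : #A = #C) (hAC : A ≠ C) : (A \ C).Nonempty :=
  sdiff_nonempty.2 fun hsub => hAC (eq_of_subset_of_card_le hsub h.ge)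

theorem exists_insert_erase_eq {x : α} (h : #A = #C) (hx : x ∈ A \ C) (h₁ : #(A \ C) ≤ 1) :
    ∃ y ∈ C \ A, insert y (A.erase x) = C := by
  have hAC : A \ C = {x} :=
    eq_singleton_iff_unique_mem.2 ⟨hx, fun p hp => card_le_one.1 h₁ p hp x hx⟩
  obtain ⟨y, hCA⟩ := card_eq_one.1 (by rw [← card_sdiff_comm h, hAC, card_singleton])
  refine ⟨y, hCA ▸ mem_singleton_self y, ?_⟩
  have hAC' : ∀ p, p ∈ A ∧ p ∉ C ↔ p = x := fun p => by rw [← mem_sdiff, hAC, mem_singleton]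
  have hCA' : ∀ p, p ∈ C ∧ p ∉ A ↔ p = y := fun p => by rw [← mem_sdiff, hCA, mem_singleton]
  ext p
  simp only [mem_insert, mem_erase]
  grind

end Cardinality

variable {n : ℕ}

theorem dotProduct_ind (w : Fin n → ℝ) (B : Finset (Fin n)) : w ⬝ᵥ ind n B = ∑ i ∈ B, w i := by
  simp [dotProduct, ind, Finset.sum_ite_mem]

theorem ind_dotProduct_ind (A D : Finset (Fin n)) : ind n A ⬝ᵥ ind n D = #(A ∩ D) := by
  simp [dotProduct_ind, ind, inter_comm]

theorem ind_injective : Function.Injective (ind n) := by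
  intro A B h
  ext i
  have := congrFun h i
  by_cases hA : i ∈ A <;> by_cases hB : i ∈ B <;> simp_all [ind]

theorem ind_insert_erase {A : Finset (Fin n)} {a b : Fin n} (ha : a ∈ A) (hb : b ∉ A) :
    ind n (insert b (A.erase a)) = ind n A + (Pi.single b 1 - Pi.single a 1) := by
  ext i
  by_cases hib : i = b <;> by_cases hia : i = a <;> simp_all [ind]

theorem dotProduct_ind_insert_erase (w : Fin n → ℝ) {A : Finset (Fin n)} {a b : Fin n}
    (ha : a ∈ A) (hb : b ∉ A) :
    w ⬝ᵥ ind n (insert b (A.erase a)) = w ⬝ᵥ ind n A + (w b - w a) := by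
  simp [ind_insert_erase ha hb, dotProduct_add, dotProduct_sub, dotProduct_single]

theorem face_polytopeOf {𝓑 : Finset (Finset (Fin n))} {w : Fin n → ℝ} {A : Finset (Fin n)}
    (hA : A ∈ 𝓑) (hmax : ∀ D ∈ 𝓑, w ⬝ᵥ ind n D ≤ w ⬝ᵥ ind n A) :
    {x ∈ polytopeOf n 𝓑 | ∀ y ∈ polytopeOf n 𝓑, ∑ i, w i * y i ≤ ∑ i, w i * x i} =
      convexHull ℝ (ind n '' {D | D ∈ 𝓑 ∧ w ⬝ᵥ ind n D = w ⬝ᵥ ind n A}) := by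
  set l := dotProductBilin ℝ ℝ w
  have hle : ∀ y ∈ polytopeOf n 𝓑, l y ≤ l (ind n A) :=
    convexHull_min (by rintro _ ⟨D, hD, rfl⟩; exact hmax D hD)
      (convex_halfSpace_le l.isLinear _)
  have hA' : ind n A ∈ polytopeOf n 𝓑 := subset_convexHull ℝ _ ⟨A, hA, rfl⟩
  calc {x ∈ polytopeOf n 𝓑 | ∀ y ∈ polytopeOf n 𝓑, ∑ i, w i * y i ≤ ∑ i, w i * x i}
      = polytopeOf n 𝓑 ∩ {x | l x = l (ind n A)} := by
        ext x
        exact ⟨fun ⟨hx, hmx⟩ => ⟨hx, (hle x hx).antisymm (hmx _ hA')⟩,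
          fun ⟨hx, hlx⟩ => ⟨hx, fun y hy => (hle y hy).trans hlx.ge⟩⟩
    _ = convexHull ℝ (ind n '' 𝓑 ∩ {x | l x = l (ind n A)}) :=
        convexHull_inter_hyperplane_of_le l (by rintro _ ⟨D, hD, rfl⟩; exact hmax D hD)
    _ = _ := by rw [← Set.image_inter_preimage]; rfl

theorem ExchangeAxiom.exists_maximal_exchange {𝓑 : Finset (Finset (Fin n))}
    (hex : ExchangeAxiom n 𝓑) {A B : Finset (Fin n)} (hA : A ∈ 𝓑) (hB : B ∈ 𝓑)
    (hAB : (A \ B).Nonempty) {w : Fin n → ℝ} (hmax : ∀ D ∈ 𝓑, w ⬝ᵥ ind n D ≤ w ⬝ᵥ ind n A)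
    (hBA : w ⬝ᵥ ind n B = w ⬝ᵥ ind n A) :
    ∃ a ∈ A, ∃ b ∉ A, insert b (A.erase a) ∈ 𝓑 ∧
      w ⬝ᵥ ind n (insert b (A.erase a)) = w ⬝ᵥ ind n A := by
  -- for `a` lightest in `A \ B`, maximality of `A` and `B` gives `w b ≤ w a ≤ w a' ≤ w b`
  obtain ⟨a, ha, hmin⟩ := (A \ B).exists_min_image w hAB
  obtain ⟨b, hb, hbB⟩ := hex A hA B hB a ha
  rw [mem_sdiff] at ha hb
  have hba := hmax _ hbB
  rw [dotProduct_ind_insert_erase w ha.1 hb.2] at hba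
  refine ⟨a, ha.1, b, hb.2, hbB, ?_⟩
  obtain ⟨a', ha', ha'B⟩ := hex B hB A hA b (mem_sdiff.2 hb)
  have hab' := hmax _ ha'B
  rw [dotProduct_ind_insert_erase w hb.1 (mem_sdiff.1 ha').2, hBA] at hab'
  have := hmin a' ha'
  rw [dotProduct_ind_insert_erase w ha.1 hb.2]
  linarith

theorem ExchangeAxiom.edge_direction {𝓑 : Finset (Finset (Fin n))} {k : ℕ}
    (hex : ExchangeAxiom n 𝓑) (h0 : 𝓑.Nonempty) (hk : ∀ B ∈ 𝓑, #B = k)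
    {F : Set (Fin n → ℝ)} (hF : IsFaceOf n (polytopeOf n 𝓑) F)
    (h1 : Module.finrank ℝ (affineSpan ℝ F).direction = 1) :
    ∃ i j : Fin n, (affineSpan ℝ F).direction =
      Submodule.span ℝ {(Pi.single i 1 - Pi.single j 1 : Fin n → ℝ)} := by
  obtain ⟨w, rfl⟩ := hF
  obtain ⟨A, hA, hmax⟩ := 𝓑.exists_max_image (fun D => w ⬝ᵥ ind n D) h0
  rw [face_polytopeOf hA hmax, affineSpan_convexHull, direction_affineSpan] at h1 ⊢
  set M := {D | D ∈ 𝓑 ∧ w ⬝ᵥ ind n D = w ⬝ᵥ ind n A}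
  obtain ⟨B, ⟨hB, hBA⟩, hne⟩ : ∃ B ∈ M, B ≠ A := by
    by_contra! h
    have : ind n '' M = {ind n A} := by
      refine Set.eq_singleton_iff_unique_mem.2 ⟨⟨A, ⟨hA, rfl⟩, rfl⟩, ?_⟩
      rintro _ ⟨D, hD, rfl⟩
      rw [h D hD]
    rw [this, vectorSpan_singleton, finrank_bot] at h1
    exact zero_ne_one h1
  obtain ⟨a, ha, b, hb, hC, hCA⟩ := hex.exists_maximal_exchange hA hB
    (sdiff_nonempty_of_card_eq (by rw [hk A hA, hk B hB]) hne.symm) hmax hBA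
  refine ⟨b, a, eq_span_singleton_of_mem_of_finrank_eq_one h1 ?_ ?_⟩
  · have := vsub_mem_vectorSpan ℝ (Set.mem_image_of_mem (ind n) (show _ ∈ M from ⟨hC, hCA⟩))
      (Set.mem_image_of_mem (ind n) (show A ∈ M from ⟨hA, rfl⟩))
    rwa [vsub_eq_sub, ind_insert_erase ha hb, add_sub_cancel_left] at this
  · intro h
    have := congrFun h b
    simp [show b ≠ a by rintro rfl; exact hb ha] at this

theorem card_sdiff_le_one_of_mem_span {A C : Finset (Fin n)} (h : #A = #C) {i j : Fin n}
    (hij : ind n A - ind n C ∈ Submodule.span ℝ {(Pi.single i 1 - Pi.single j 1 : Fin n → ℝ)}) :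
    #(A \ C) ≤ 1 := by
  obtain ⟨t, ht⟩ := Submodule.mem_span_singleton.1 hij
  have hsub : A \ C ∪ C \ A ⊆ {i, j} := by
    intro p hp
    have hp' := congrFun ht p
    by_contra hpij
    simp only [mem_insert, mem_singleton, not_or] at hpij
    simp only [Pi.smul_apply, Pi.sub_apply, Pi.single_apply, hpij.1, hpij.2, if_false,
      sub_self, smul_zero, ind] at hp'
    rcases mem_union.1 hp with hp | hp <;> rw [mem_sdiff] at hp <;> simp [hp] at hp'
  have := (card_le_card hsub).trans card_le_two
  rw [card_union_of_disjoint disjoint_sdiff_sdiff, ← card_sdiff_comm h] at this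
  omega

/-- Exposes the segment `[e_A, e_C]`: the first term confines the maximum to the sets between
`A ∩ C` and `A ∪ C`; the second, whose values stay below the factor `#(A \ C) + 1`, vanishes at
`A` and `C` and is negative at every other such set containing `x`. -/
noncomputable def edgeWeight (A C : Finset (Fin n)) (x : Fin n) : Fin n → ℝ :=
  ((#(A \ C) : ℝ) + 1) • (ind n A + ind n C) + (ind n (A \ C) - (#(A \ C) : ℝ) • Pi.single x 1)

theorem edgeWeight_dotProduct_ind (A C D : Finset (Fin n)) (x : Fin n) :
    edgeWeight A C x ⬝ᵥ ind n D = ((#(A \ C) : ℝ) + 1) * ((#(A ∩ D) + #(C ∩ D) : ℕ) : ℝ) +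
      (#((A \ C) ∩ D) - #(A \ C) * ind n D x) := by
  simp only [edgeWeight, add_dotProduct, sub_dotProduct, smul_dotProduct, ind_dotProduct_ind,
    single_dotProduct, smul_eq_mul, one_mul, Nat.cast_add]

theorem edgeWeight_dotProduct_ind_left {A C : Finset (Fin n)} {x : Fin n} (hx : x ∈ A \ C) :
    edgeWeight A C x ⬝ᵥ ind n A = ((#(A \ C) : ℝ) + 1) * ((#A + #(A ∩ C) : ℕ) : ℝ) := by
  rw [edgeWeight_dotProduct_ind, inter_self, inter_comm C, inter_eq_left.2 sdiff_subset]
  simp [ind, (mem_sdiff.1 hx).1]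

theorem edgeWeight_dotProduct_ind_right {A C : Finset (Fin n)} {x : Fin n} (h : #A = #C)
    (hx : x ∈ A \ C) : edgeWeight A C x ⬝ᵥ ind n C = edgeWeight A C x ⬝ᵥ ind n A := by
  have hxC : ind n C x = 0 := by simp [ind, (mem_sdiff.1 hx).2]
  rw [edgeWeight_dotProduct_ind_left hx, edgeWeight_dotProduct_ind, inter_self, sdiff_inter_self,
    hxC, card_empty, h, add_comm #C]
  simp

theorem edgeWeight_dotProduct_ind_lt {A C D : Finset (Fin n)} {x : Fin n} (h : #A = #C)
    (hD : #D = #A) (hx : x ∈ A \ C) (hDA : D ≠ A) (hDC : D ≠ C)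
    (hmin : x ∉ D → D ⊆ A ∪ C → #(A \ C) ≤ #(A \ D)) :
    edgeWeight A C x ⬝ᵥ ind n D < edgeWeight A C x ⬝ᵥ ind n A := by
  rw [edgeWeight_dotProduct_ind_left hx, edgeWeight_dotProduct_ind]
  by_cases hint : A ∩ C ⊆ D ∧ D ⊆ A ∪ C
  · rw [card_inter_add_card_inter_of_subset hint.1 hint.2, hD]
    by_cases hxD : x ∈ D
    · -- `D ≠ A` cannot contain all of `A \ C`
      have : #((A \ C) ∩ D) < #(A \ C) := by
        refine card_lt_card ⟨inter_subset_left, fun hsub => hDA ?_⟩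
        refine (eq_of_subset_of_card_le ?_ hD.le).symm
        rw [← sdiff_union_inter A C]
        exact union_subset (hsub.trans inter_subset_right) hint.1
      have : (#((A \ C) ∩ D) : ℝ) + 1 ≤ #(A \ C) := by exact_mod_cast this
      simp only [ind, if_pos hxD]
      linarith
    · -- by minimality of `C`, `D` meets `A` only in `A ∩ C`, hence `D = C`
      exfalso
      have hsdiff : A \ D = A \ C := eq_of_subset_of_card_le
        (fun p hp => mem_sdiff.2 ⟨(mem_sdiff.1 hp).1, fun hpC =>
          (mem_sdiff.1 hp).2 (hint.1 (mem_inter.2 ⟨(mem_sdiff.1 hp).1, hpC⟩))⟩)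
        (hmin hxD hint.2)
      refine hDC (eq_of_subset_of_card_le (fun p hp => ?_) (h ▸ hD).ge)
      rcases mem_union.1 (hint.2 hp) with hpA | hpC
      · by_contra hpC
        have : p ∈ A \ D := hsdiff ▸ mem_sdiff.2 ⟨hpA, hpC⟩
        exact (mem_sdiff.1 this).2 hp
      · exact hpC
  · have hlt : ((#(A ∩ D) + #(C ∩ D) : ℕ) : ℝ) + 1 ≤ ((#A + #(A ∩ C) : ℕ) : ℝ) := by
      rw [← hD]; exact_mod_cast card_inter_add_card_inter_lt hint
    have hAD : (#((A \ C) ∩ D) : ℝ) ≤ #(A \ C) := by exact_mod_cast card_le_card inter_subset_left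
    have hxD : 0 ≤ ind n D x := by unfold ind; split_ifs <;> norm_num
    have := mul_le_mul_of_nonneg_left hlt (by positivity : (0 : ℝ) ≤ #(A \ C) + 1)
    nlinarith

theorem isFaceOf_segment {𝓑 : Finset (Finset (Fin n))} {A C : Finset (Fin n)} {w : Fin n → ℝ}
    (hA : A ∈ 𝓑) (hC : C ∈ 𝓑) (hCA : w ⬝ᵥ ind n C = w ⬝ᵥ ind n A)
    (hlt : ∀ D ∈ 𝓑, D ≠ A → D ≠ C → w ⬝ᵥ ind n D < w ⬝ᵥ ind n A) :
    IsFaceOf n (polytopeOf n 𝓑) (segment ℝ (ind n A) (ind n C)) := by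
  have hmax : ∀ D ∈ 𝓑, w ⬝ᵥ ind n D ≤ w ⬝ᵥ ind n A := fun D hD => by
    by_cases hDA : D = A
    · rw [hDA]
    by_cases hDC : D = C
    · rw [hDC, hCA]
    exact (hlt D hD hDA hDC).le
  refine ⟨w, ?_⟩
  rw [face_polytopeOf hA hmax, ← convexHull_pair, ← Set.image_pair]
  congr 2
  ext D
  refine ⟨fun hD => ?_, fun ⟨hD, hwD⟩ => ?_⟩
  · rcases hD with rfl | rfl
    exacts [⟨hA, rfl⟩, ⟨hC, hCA⟩]
  · by_contra hne
    simp only [Set.mem_insert_iff, Set.mem_singleton_iff, not_or] at hne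
    exact (hlt D hD hne.1 hne.2).ne hwD

theorem exchangeAxiom_of_edge_direction {𝓑 : Finset (Finset (Fin n))} {k : ℕ}
    (hk : ∀ B ∈ 𝓑, #B = k)
    (hedge : ∀ F : Set (Fin n → ℝ), IsFaceOf n (polytopeOf n 𝓑) F →
      Module.finrank ℝ (affineSpan ℝ F).direction = 1 →
      ∃ i j : Fin n, (affineSpan ℝ F).direction =
        Submodule.span ℝ {(Pi.single i 1 - Pi.single j 1 : Fin n → ℝ)}) :
    ExchangeAxiom n 𝓑 := by
  intro A hA B hB x hx
  obtain ⟨C, hC, hmin⟩ := exists_min_image {C ∈ 𝓑 | C ⊆ A ∪ B ∧ x ∉ C} (fun C => #(A \ C))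
    ⟨B, mem_filter.2 ⟨hB, subset_union_right, (mem_sdiff.1 hx).2⟩⟩
  obtain ⟨hC, hCAB, hxC⟩ := mem_filter.1 hC
  have hxAC : x ∈ A \ C := mem_sdiff.2 ⟨(mem_sdiff.1 hx).1, hxC⟩
  have hcard : #A = #C := by rw [hk A hA, hk C hC]
  have hAC : ind n A ≠ ind n C := ind_injective.ne (ne_of_mem_of_not_mem' (mem_sdiff.1 hxAC).1 hxC)
  have hface := isFaceOf_segment hA hC (edgeWeight_dotProduct_ind_right hcard hxAC)
    fun D hD hDA hDC => edgeWeight_dotProduct_ind_lt hcard (by rw [hk D hD, hk A hA]) hxAC hDA hDC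
      fun hxD hDAC => hmin D <|
        mem_filter.2 ⟨hD, hDAC.trans (union_subset subset_union_left hCAB), hxD⟩
  have hdir : (affineSpan ℝ (segment ℝ (ind n A) (ind n C))).direction =
      Submodule.span ℝ {ind n A - ind n C} := by
    rw [← convexHull_pair, affineSpan_convexHull, direction_affineSpan, vectorSpan_pair,
      vsub_eq_sub]
  obtain ⟨i, j, hij⟩ :=
    hedge _ hface (by rw [hdir]; exact finrank_span_singleton (sub_ne_zero.2 hAC))
  obtain ⟨y, hy, hyC⟩ := exists_insert_erase_eq hcard hxAC
    (card_sdiff_le_one_of_mem_span hcard (hij ▸ hdir ▸ Submodule.mem_span_singleton_self _))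
  obtain ⟨hyC', hyA⟩ := mem_sdiff.1 hy
  exact ⟨y, mem_sdiff.2 ⟨(mem_union.1 (hCAB hyC')).resolve_left hyA, hyA⟩, hyC ▸ hC⟩

/-- **Gelfand–Goresky–MacPherson–Serganova.** A nonempty collection `𝓑` of
`k`-element subsets of `[n]` is the collection of bases of a matroid if and only
if every edge (one-dimensional face) of `Γ_𝓑 = conv{e_B : B ∈ 𝓑}` is a parallel
translate of `e_i − e_j` for some `i, j ∈ [n]`, i.e. its direction is spanned by
`e_i − e_j`. -/
theorem ggms_matroid_polytope (n k : ℕ) (𝓑 : Finset (Finset (Fin n)))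
    (h0 : 𝓑.Nonempty) (hk : ∀ B ∈ 𝓑, B.card = k) :
    ExchangeAxiom n 𝓑 ↔
      ∀ F : Set (Fin n → ℝ), IsFaceOf n (polytopeOf n 𝓑) F →
        Module.finrank ℝ (affineSpan ℝ F).direction = 1 →
        ∃ i j : Fin n, (affineSpan ℝ F).direction =
          Submodule.span ℝ {(Pi.single i 1 - Pi.single j 1 : Fin n → ℝ)} :=
  ⟨fun hex _ hF h1 => hex.edge_direction h0 hk hF h1, exchangeAxiom_of_edge_direction hk⟩
end

section
/- For any matroid M on ground set [n], the dimension of its matroid (basis) polytope Γ_M equals n − c, where c is the number of connected components of M. -/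
open scoped BigOperators

/-- The basis-exchange relation on the ground set: `a ∼ b` iff `a = b` or there
are bases `B₁, B₂` with `a ∈ B₁`, `b ∉ B₁` and `B₂ = (B₁ \ {a}) ∪ {b}`.  Its
equivalence classes are the connected components of the matroid. -/
def exchRel (n : ℕ) (𝓑 : Finset (Finset (Fin n))) (a b : Fin n) : Prop :=
  a = b ∨ ∃ B₁ ∈ 𝓑, ∃ B₂ ∈ 𝓑, a ∈ B₁ ∧ b ∉ B₁ ∧ B₂ = insert b (B₁.erase a)



lemma ind_swap (n : ℕ) (a b : Fin n) (B : Finset (Fin n)) (ha : a ∈ B) (hb : b ∉ B) :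
    ind n B - ind n (insert b (B.erase a)) = ind n {a} - ind n {b} := by
  have hab : a ≠ b := fun h => hb (h ▸ ha)
  funext j
  simp only [Pi.sub_apply, ind, Finset.mem_insert, Finset.mem_erase, Finset.mem_singleton]
  by_cases hja : j = a
  · subst hja; simp [hab, Ne.symm hab, ha]
  · by_cases hjb : j = b
    · subst hjb; simp [hb, Ne.symm hab]
    · simp [hja, hjb]

open Classical in
noncomputable def phi (n : ℕ) (𝓑 : Finset (Finset (Fin n))) :
    (Fin n → ℝ) →ₗ[ℝ] (Quot (exchRel n 𝓑) → ℝ) where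
  toFun x := fun q => ∑ i : Fin n, if Quot.mk _ i = q then x i else 0
  map_add' x y := by
    funext q
    simp only [Pi.add_apply, ← Finset.sum_add_distrib]
    exact Finset.sum_congr rfl fun i _ => by split <;> simp
  map_smul' c x := by
    funext q
    simp only [Pi.smul_apply, RingHom.id_apply, smul_eq_mul, Finset.mul_sum]
    exact Finset.sum_congr rfl fun i _ => by split <;> simp

open Classical in
lemma phi_single (n : ℕ) (𝓑 : Finset (Finset (Fin n))) (a : Fin n) :
    phi n 𝓑 (ind n {a}) = fun q => if Quot.mk _ a = q then 1 else 0 := by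
  funext q
  simp only [phi, LinearMap.coe_mk, AddHom.coe_mk, ind]
  rw [Finset.sum_congr rfl (g := fun i => if i = a ∧ Quot.mk (exchRel n 𝓑) a = q then (1:ℝ) else 0)]
  · by_cases h2 : Quot.mk (exchRel n 𝓑) a = q
    · simp only [h2, and_true]
      rw [Finset.sum_ite_eq' Finset.univ a]
      simp [h2]
    · simp [h2]
  · intro i _
    by_cases h : i = a <;> by_cases h2 : Quot.mk (exchRel n 𝓑) i = q <;> simp_all

lemma phi_single_eq (n : ℕ) (𝓑 : Finset (Finset (Fin n))) {a b : Fin n}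
    (h : Quot.mk (exchRel n 𝓑) a = Quot.mk (exchRel n 𝓑) b) :
    phi n 𝓑 (ind n {a}) = phi n 𝓑 (ind n {b}) := by
  rw [phi_single, phi_single, h]

/-- Key fact: φ(e_B) is independent of the basis B. -/
lemma phi_basis_eq (n k : ℕ) (𝓑 : Finset (Finset (Fin n)))
    (hk : ∀ B ∈ 𝓑, B.card = k) (hex : ExchangeAxiom n 𝓑) :
    ∀ m (B B' : Finset (Fin n)), B ∈ 𝓑 → B' ∈ 𝓑 → (B \ B').card = m →
      phi n 𝓑 (ind n B) = phi n 𝓑 (ind n B') := by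
  intro m
  induction m with
  | zero =>
    intro B B' hB hB' hcard
    have h1 : B ⊆ B' := by
      rw [Finset.card_eq_zero, Finset.sdiff_eq_empty_iff_subset] at hcard
      exact hcard
    have : B = B' := Finset.eq_of_subset_of_card_le h1 (by rw [hk B hB, hk B' hB'])
    rw [this]
  | succ m IH =>
    intro B B' hB hB' hcard
    have hne : (B \ B').Nonempty := by rw [← Finset.card_pos, hcard]; omega
    obtain ⟨x, hx⟩ := hne
    obtain ⟨y, hy, hB₃⟩ := hex B hB B' hB' x hx
    set B₃ := insert y (B.erase x) with hB₃def
    have hxB : x ∈ B := (Finset.mem_sdiff.1 hx).1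
    have hxB' : x ∉ B' := (Finset.mem_sdiff.1 hx).2
    have hyB' : y ∈ B' := (Finset.mem_sdiff.1 hy).1
    have hyB : y ∉ B := (Finset.mem_sdiff.1 hy).2
    -- x and y are exchRel-related
    have hrel : Quot.mk (exchRel n 𝓑) x = Quot.mk (exchRel n 𝓑) y :=
      Quot.sound (Or.inr ⟨B, hB, B₃, hB₃, hxB, hyB, rfl⟩)
    have hstep : phi n 𝓑 (ind n B) = phi n 𝓑 (ind n B₃) := by
      have h1 : ind n B - ind n B₃ = ind n {x} - ind n {y} := ind_swap n x y B hxB hyB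
      have h2 : phi n 𝓑 (ind n B - ind n B₃) = 0 := by
        rw [h1, map_sub, phi_single_eq n 𝓑 hrel, sub_self]
      have h3 := map_sub (phi n 𝓑) (ind n B) (ind n B₃)
      rw [h2] at h3
      exact sub_eq_zero.mp h3.symm
    have hsd : B₃ \ B' = (B \ B').erase x := by
      ext j
      simp only [hB₃def, Finset.mem_sdiff, Finset.mem_insert, Finset.mem_erase]
      constructor
      · rintro ⟨h | ⟨hjx, hjB⟩, hjB'⟩
        · exact absurd (h ▸ hyB') hjB'
        · exact ⟨hjx, hjB, hjB'⟩
      · rintro ⟨hjx, hjB, hjB'⟩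
        exact ⟨Or.inr ⟨hjx, hjB⟩, hjB'⟩
    have hm : (B₃ \ B').card = m := by
      rw [hsd, Finset.card_erase_of_mem (Finset.mem_sdiff.2 ⟨hxB, hxB'⟩), hcard]; omega
    rw [hstep]
    exact IH B₃ B' hB₃ hB' hm

open Relation in
lemma single_diff_mem (n : ℕ) (𝓑 : Finset (Finset (Fin n))) {a b : Fin n}
    (h : EqvGen (exchRel n 𝓑) a b) :
    ind n {a} - ind n {b} ∈ vectorSpan ℝ (ind n '' ↑𝓑) := by
  induction h with
  | rel a b hab =>
    rcases hab with rfl | ⟨B₁, hB₁, B₂, hB₂, ha, hb, rfl⟩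
    · simp
    · have := ind_swap n a b B₁ ha hb
      rw [← this]
      exact vsub_mem_vectorSpan ℝ ⟨B₁, hB₁, rfl⟩ ⟨_, hB₂, rfl⟩
  | refl a => simp
  | symm a b _ ih => rw [← neg_sub]; exact neg_mem ih
  | trans a b c _ _ ih1 ih2 => have := add_mem ih1 ih2; rwa [sub_add_sub_cancel] at this

lemma ker_le_vectorSpan (n : ℕ) (𝓑 : Finset (Finset (Fin n)))
    (x : Fin n → ℝ) (hx : phi n 𝓑 x = 0) :
    x ∈ vectorSpan ℝ (ind n '' ↑𝓑) := by
  classical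
  letI : Fintype (Quot (exchRel n 𝓑)) := Fintype.ofFinite _
  have key : x = ∑ i : Fin n, x i • (ind n {i} - ind n {(Quot.mk (exchRel n 𝓑) i).out}) := by
    have h1 : ∑ i : Fin n, x i • ind n {i} = x := by
      funext j
      simp only [Finset.sum_apply, Pi.smul_apply, ind, Finset.mem_singleton, smul_eq_mul]
      rw [Finset.sum_congr rfl (g := fun i => if j = i then x j else 0) (fun i _ => by
        by_cases h : j = i <;> simp [h])]
      simp [Finset.sum_ite_eq]
    have h2 : ∑ i : Fin n, x i • ind n {(Quot.mk (exchRel n 𝓑) i).out} = 0 := by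
      rw [← Finset.sum_fiberwise Finset.univ (fun i => Quot.mk (exchRel n 𝓑) i)
        (fun i => x i • ind n {(Quot.mk (exchRel n 𝓑) i).out})]
      apply Finset.sum_eq_zero
      intro q _
      have : ∀ i ∈ Finset.univ.filter (fun i => Quot.mk (exchRel n 𝓑) i = q),
          x i • ind n {(Quot.mk (exchRel n 𝓑) i).out} = x i • ind n {q.out} := by
        intro i hi
        rw [(Finset.mem_filter.1 hi).2]
      rw [Finset.sum_congr rfl this, ← Finset.sum_smul]
      have hphi : ∑ i ∈ Finset.univ.filter (fun i => Quot.mk (exchRel n 𝓑) i = q), x i = 0 := by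
        have := congrFun hx q
        simp only [phi, LinearMap.coe_mk, AddHom.coe_mk, Pi.zero_apply] at this
        rw [← this, Finset.sum_filter]
      rw [hphi, zero_smul]
    simp only [smul_sub, Finset.sum_sub_distrib, h1, h2, sub_zero]
  rw [key]
  exact Submodule.sum_mem _ fun i _ => Submodule.smul_mem _ _
    (single_diff_mem n 𝓑 (Quot.eqvGen_exact (by rw [Quot.out_eq])))

open Classical in
lemma phi_surj (n : ℕ) (𝓑 : Finset (Finset (Fin n))) :
    Function.Surjective (phi n 𝓑) := by
  intro f
  set N : Quot (exchRel n 𝓑) → ℝ := fun q => ∑ j : Fin n, if Quot.mk _ j = q then (1:ℝ) else 0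
    with hN
  have hNpos : ∀ q, 0 < N q := by
    intro q
    obtain ⟨a, rfl⟩ := Quot.exists_rep q
    apply Finset.sum_pos' (fun j _ => by positivity)
    exact ⟨a, Finset.mem_univ a, by simp⟩
  refine ⟨fun i => f (Quot.mk _ i) / N (Quot.mk _ i), ?_⟩
  funext q
  simp only [phi, LinearMap.coe_mk, AddHom.coe_mk]
  have : ∀ i ∈ Finset.univ,
      (if Quot.mk (exchRel n 𝓑) i = q then f (Quot.mk _ i) / N (Quot.mk _ i) else 0) =
      (if Quot.mk (exchRel n 𝓑) i = q then (1:ℝ) else 0) * (f q / N q) := by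
    intro i _
    by_cases h : Quot.mk (exchRel n 𝓑) i = q <;> simp [h]
  rw [Finset.sum_congr rfl this, ← Finset.sum_mul]
  have hNq : (∑ i : Fin n, if Quot.mk (exchRel n 𝓑) i = q then (1:ℝ) else 0) = N q := rfl
  rw [hNq, div_eq_inv_mul, ← mul_assoc, mul_inv_cancel₀ (hNpos q).ne', one_mul]

theorem dim_matroid_polytope' (n k : ℕ) (𝓑 : Finset (Finset (Fin n)))
    (h0 : 𝓑.Nonempty) (hk : ∀ B ∈ 𝓑, B.card = k) (hex : ExchangeAxiom n 𝓑) :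
    Module.finrank ℝ (affineSpan ℝ (convexHull ℝ (ind n '' ↑𝓑))).direction =
      n - Nat.card (Quot (exchRel n 𝓑)) := by
  classical
  rw [affineSpan_convexHull, direction_affineSpan]
  have hVK : vectorSpan ℝ (ind n '' ↑𝓑) = LinearMap.ker (phi n 𝓑) := by
    apply le_antisymm
    · rw [vectorSpan_def, Submodule.span_le]
      rintro v ⟨p, ⟨B, hB, rfl⟩, p', ⟨B', hB', rfl⟩, rfl⟩
      simp only [SetLike.mem_coe, LinearMap.mem_ker, vsub_eq_sub, map_sub]
      rw [phi_basis_eq n k 𝓑 hk hex (B \ B').card B B' hB hB' rfl, sub_self]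
    · intro x hx
      exact ker_le_vectorSpan n 𝓑 x (LinearMap.mem_ker.1 hx)
  rw [hVK]
  letI : Fintype (Quot (exchRel n 𝓑)) := Fintype.ofFinite _
  have hrank := LinearMap.finrank_range_add_finrank_ker (phi n 𝓑)
  have hrange : LinearMap.range (phi n 𝓑) = ⊤ := LinearMap.range_eq_top.2 (phi_surj n 𝓑)
  rw [hrange, finrank_top] at hrank
  have hc : Module.finrank ℝ (Quot (exchRel n 𝓑) → ℝ) = Nat.card (Quot (exchRel n 𝓑)) := by
    rw [Module.finrank_pi, Nat.card_eq_fintype_card]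
  have hn : Module.finrank ℝ (Fin n → ℝ) = n := by simp
  rw [hc, hn] at hrank
  omega

/-- For any matroid `M` on `[n]`, the dimension of the matroid polytope `Γ_M`
equals `n − c`, where `c` is the number of connected components of `M`. -/
theorem dim_matroid_polytope (n k : ℕ) (𝓑 : Finset (Finset (Fin n)))
    (h0 : 𝓑.Nonempty) (hk : ∀ B ∈ 𝓑, B.card = k) (hex : ExchangeAxiom n 𝓑) :
    Module.finrank ℝ (affineSpan ℝ (polytopeOf n 𝓑)).direction =
      n - Nat.card (Quot (exchRel n 𝓑)) := by
  exact dim_matroid_polytope' n k 𝓑 h0 hk hex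
end

section
/- Let k ≤ n/2 be as in the m=2 momentum amplituhedron setup, let (Ỹ, Y) = Φ_{Λ̃,Λ}(V) for V ∈ Gr⁺_{k+1,n}, where Ỹ = Λ̃·V ∈ Gr_{k+1,k+2} and Y = Λ·V^⊥ ∈ Gr_{n−k−1,n−k}. Let Ỹ^⊥ ∈ ℝ^{k+2} and Y^⊥ ∈ ℝ^{n−k} span the orthogonal complements of Ỹ and Y (each one-dimensional). Then Λᵗ(Y^⊥) · Λ̃ᵗ(Ỹ^⊥) = 0 in ℝⁿ. -/
open scoped BigOperators RealInnerProductSpace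

/-- The maximal minor of a `k × n` matrix with column set `I` (zero if `|I| ≠ k`). -/
noncomputable def minor (k n : ℕ) (A : Matrix (Fin k) (Fin n) ℝ) (I : Finset (Fin n)) : ℝ :=
  if h : I.card = k then (A.submatrix id fun j : Fin k => ((I.orderIsoOfFin h j : I) : Fin n)).det
  else 0

/-- **Momentum conservation for the `m = 2` momentum amplituhedron.** Let
`V ∈ Gr⁺_{k+1,n}` (a totally nonnegative `(k+1)`-plane in `ℝⁿ`), let
`Ỹ = Λ̃·V ⊆ ℝ^{k+2}` and `Y = Λ·V^⊥ ⊆ ℝ^{n−k}` with `dim Ỹ = k+1` and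
`dim Y = n−k−1`.  Then for any `ỹ` spanning `Ỹ^⊥` and `y` spanning `Y^⊥` we
have `⟨Λᵗ y, Λ̃ᵗ ỹ⟩ = 0` in `ℝⁿ`. -/
theorem momentum_amplituhedron_orthogonality (n k : ℕ) (hkn : k + 2 ≤ n)
    (Λt : Matrix (Fin (k + 2)) (Fin n) ℝ) (Λ : Matrix (Fin (n - k)) (Fin n) ℝ)
    (hΛt : Λt.rank = k + 2) (hΛ : Λ.rank = n - k)
    (V : Submodule ℝ (EuclideanSpace ℝ (Fin n)))
    (hVdim : Module.finrank ℝ V = k + 1)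
    (hVpos : ∃ A : Matrix (Fin (k + 1)) (Fin n) ℝ,
      (∀ I : Finset (Fin n), 0 ≤ minor (k + 1) n A I) ∧
      Submodule.span ℝ {x : EuclideanSpace ℝ (Fin n) | ∃ i, ∀ j, x j = A i j} = V)
    (hYt : Module.finrank ℝ (V.map (Matrix.toEuclideanLin Λt)) = k + 1)
    (hY : Module.finrank ℝ ((Vᗮ).map (Matrix.toEuclideanLin Λ)) = n - k - 1) :
    ∀ yt ∈ (V.map (Matrix.toEuclideanLin Λt))ᗮ,
      ∀ y ∈ ((Vᗮ).map (Matrix.toEuclideanLin Λ))ᗮ,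
        ⟪(Matrix.toEuclideanLin Λ.transpose) y,
          (Matrix.toEuclideanLin Λt.transpose) yt⟫ = (0 : ℝ) := by
  intro yt hyt y hy
  have hadjt : Matrix.toEuclideanLin Λt.transpose
      = LinearMap.adjoint (Matrix.toEuclideanLin Λt) := by
    rw [← Matrix.toEuclideanLin_conjTranspose_eq_adjoint, Matrix.conjTranspose_eq_transpose_of_trivial]
  have hadj : Matrix.toEuclideanLin Λ.transpose
      = LinearMap.adjoint (Matrix.toEuclideanLin Λ) := by
    rw [← Matrix.toEuclideanLin_conjTranspose_eq_adjoint, Matrix.conjTranspose_eq_transpose_of_trivial]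
  have h1 : (Matrix.toEuclideanLin Λt.transpose) yt ∈ Vᗮ := by
    intro u hu
    rw [hadjt, real_inner_comm, LinearMap.adjoint_inner_left]
    rw [real_inner_comm]; exact hyt _ (Submodule.mem_map_of_mem hu)
  have h2 : (Matrix.toEuclideanLin Λ.transpose) y ∈ V := by
    rw [← Submodule.orthogonal_orthogonal V]
    intro u hu
    rw [hadj, real_inner_comm, LinearMap.adjoint_inner_left]
    rw [real_inner_comm]; exact hy _ (Submodule.mem_map_of_mem hu)
  exact h1 _ h2
end

section
/- More generally, for even m, let V ∈ Gr⁺_{k+m/2,n}, Λ̃ ∈ Mat_{(k+m)×n}, Λ ∈ Mat_{(n−k)×n}, Ỹ = Λ̃·V ∈ Gr_{k+m/2,k+m} and Y = Λ·V^⊥ ∈ Gr_{n−k−m/2,n−k} (assuming these images have the stated dimensions). Then the subspace Λ̃ᵗ(Ỹ^⊥) of ℝⁿ is contained in the orthogonal complement of the subspace Λᵗ(Y^⊥), where Ỹ^⊥ ⊆ ℝ^{k+m} and Y^⊥ ⊆ ℝ^{n−k} are the (m/2)-dimensional orthogonal complements of Ỹ and Y. -/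
open scoped BigOperators

lemma transpose_toEuclideanLin_adjoint {a b : ℕ} (A : Matrix (Fin a) (Fin b) ℝ) :
    Matrix.toEuclideanLin A.transpose =
      LinearMap.adjoint (Matrix.toEuclideanLin A) := by
  rw [← Matrix.toEuclideanLin_conjTranspose_eq_adjoint]
  congr 1

/-- **Momentum conservation for the momentum amplituhedron, general even `m = 2h`.**
For `V ∈ Gr⁺_{k+m/2,n}`, `Ỹ = Λ̃·V ∈ Gr_{k+m/2,k+m}` and
`Y = Λ·V^⊥ ∈ Gr_{n−k−m/2,n−k}` (with the stated dimensions), the subspace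
`Λ̃ᵗ(Ỹ^⊥) ⊆ ℝⁿ` is contained in the orthogonal complement of `Λᵗ(Y^⊥) ⊆ ℝⁿ`. -/
theorem momentum_amplituhedron_orthogonality_general (n k h : ℕ)
    (hkn : k + 2 * h ≤ n)
    (Λt : Matrix (Fin (k + 2 * h)) (Fin n) ℝ) (Λ : Matrix (Fin (n - k)) (Fin n) ℝ)
    (hΛt : Λt.rank = k + 2 * h) (hΛ : Λ.rank = n - k)
    (V : Submodule ℝ (EuclideanSpace ℝ (Fin n)))
    (hVdim : Module.finrank ℝ V = k + h)
    (hVpos : ∃ A : Matrix (Fin (k + h)) (Fin n) ℝ,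
      (∀ I : Finset (Fin n), 0 ≤ minor (k + h) n A I) ∧
      Submodule.span ℝ {x : EuclideanSpace ℝ (Fin n) | ∃ i, ∀ j, x j = A i j} = V)
    (hYt : Module.finrank ℝ (V.map (Matrix.toEuclideanLin Λt)) = k + h)
    (hY : Module.finrank ℝ ((Vᗮ).map (Matrix.toEuclideanLin Λ)) = n - k - h) :
    ((V.map (Matrix.toEuclideanLin Λt))ᗮ).map (Matrix.toEuclideanLin Λt.transpose)
      ≤ ((((Vᗮ).map (Matrix.toEuclideanLin Λ))ᗮ).map
          (Matrix.toEuclideanLin Λ.transpose))ᗮ := by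
  intro x hx
  rw [Submodule.mem_orthogonal]
  intro y hy
  obtain ⟨u, hu, rfl⟩ := hx
  obtain ⟨w, hw, rfl⟩ := hy
  -- Λtᵀ u ∈ Vᗮ
  have hxV : Matrix.toEuclideanLin Λt.transpose u ∈ Vᗮ := by
    rw [Submodule.mem_orthogonal]
    intro v hv
    have := hu (Matrix.toEuclideanLin Λt v) ⟨v, hv, rfl⟩
    rw [transpose_toEuclideanLin_adjoint, real_inner_comm,
      LinearMap.adjoint_inner_left]
    rw [real_inner_comm] at this
    exact this
  -- Λᵀ w ∈ V
  have hyV : Matrix.toEuclideanLin Λ.transpose w ∈ V := by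
    rw [← V.orthogonal_orthogonal, Submodule.mem_orthogonal]
    intro v hv
    have := hw (Matrix.toEuclideanLin Λ v) ⟨v, hv, rfl⟩
    rw [transpose_toEuclideanLin_adjoint, real_inner_comm,
      LinearMap.adjoint_inner_left]
    rw [real_inner_comm] at this
    exact this
  rw [Submodule.mem_orthogonal] at hxV
  exact hxV _ hyV
end

section
/- Let π be a loopless decorated permutation with k+1 anti-excedances corresponding to a positroid cell S_π ⊆ Gr⁺_{k+1,n}, and let π̂ be its T-dual (π̂(i) = π(i−1) mod n, fixed points decorated as loops), corresponding to S_π̂ ⊆ Gr⁺_{k,n}. Then dim S_π̂ − 2k = dim S_π − (n−1). In particular, if dim S_π = n − 1 then dim S_π̂ = 2k. -/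
open scoped BigOperators

/-- The dimension of the positroid cell of `Gr⁺_{k,n}` indexed by a `(k,n)`-bounded
affine permutation `f`, via the standard formula
`dim S_π = Σ_{a=1}^n r[a, f(a)] − k²`, where
`r[a,b] = #{i ∈ [a,b] : f(i) > b}` is the rank of the cyclic interval of
columns from `a` to `b`. -/
noncomputable def cellDim (n k : ℕ) (f : ℤ → ℤ) : ℤ :=
  (∑ a ∈ Finset.Icc (1 : ℤ) (n : ℤ),
    (((Finset.Icc a (f a)).filter fun i => f a < f i).card : ℤ)) - (k : ℤ) ^ 2

/-- auxiliary: the summand of `cellDim`. -/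
noncomputable def tdualF (f : ℤ → ℤ) (b : ℤ) : ℤ :=
  (((Finset.Icc b (f b)).filter fun i => f b < f i).card : ℤ)

/-- **T-duality and cell dimensions.** Let `f` be the `(k+1,n)`-bounded affine
permutation of a loopless positroid cell `S_π ⊆ Gr⁺_{k+1,n}`.  Its T-dual
`f̂(i) = f(i−1)` indexes a cell `S_π̂ ⊆ Gr⁺_{k,n}`, and
`dim S_π̂ − 2k = dim S_π − (n−1)`. -/
theorem tduality_dimension (n k : ℕ) (hn : 0 < n) (f : ℤ → ℤ)
    (hbij : Function.Bijective f)
    (hper : ∀ i, f (i + n) = f i + n)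
    (hlow : ∀ i, i ≤ f i) (hhigh : ∀ i, f i ≤ i + n)
    (hsum : (∑ i ∈ Finset.Icc (1 : ℤ) (n : ℤ), (f i - i)) = ((k : ℤ) + 1) * n)
    (hloopless : ∀ i, f i ≠ i) :
    cellDim n k (fun i => f (i - 1)) - 2 * k = cellDim n (k + 1) f - ((n : ℤ) - 1) := by
  have hstrict : ∀ i, i < f i := fun i => lt_of_le_of_ne (hlow i) (Ne.symm (hloopless i))
  -- key pointwise identity : shifted summand at a = original summand at a-1, minus 1
  have key : ∀ a : ℤ, tdualF (fun i => f (i - 1)) a = tdualF f (a - 1) - 1 := by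
    intro a
    obtain ⟨b, rfl⟩ : ∃ b, a = b + 1 := ⟨a - 1, by ring⟩
    simp only [tdualF, add_sub_cancel_right]
    have hbf : b < f b := hstrict b
    have hmap : Finset.Icc (b + 1) (f b) = (Finset.Icc b (f b - 1)).map (addRightEmbedding 1) := by
      rw [Finset.map_add_right_Icc]; congr 1; ring
    have h1 : ((Finset.Icc (b + 1) (f b)).filter fun i => f b < f (i - 1))
        = ((Finset.Icc b (f b - 1)).filter fun j => f b < f j).map (addRightEmbedding 1) := by
      rw [hmap, Finset.filter_map]
      congr 1
      apply Finset.filter_congr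
      intro j _
      have : ((addRightEmbedding (1 : ℤ)) j : ℤ) = j + 1 := rfl
      simp [Function.comp, this, add_sub_cancel_right]
    have h2 : Finset.Icc b (f b) = insert (f b) (Finset.Icc b (f b - 1)) := by
      ext x; simp only [Finset.mem_insert, Finset.mem_Icc]; omega
    have h3 : ((Finset.Icc b (f b)).filter fun i => f b < f i).card
        = ((Finset.Icc b (f b - 1)).filter fun j => f b < f j).card + 1 := by
      rw [h2, Finset.filter_insert, if_pos (hstrict (f b)),
        Finset.card_insert_of_notMem (by simp only [Finset.mem_filter, Finset.mem_Icc]; omega)]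
    rw [h1, Finset.card_map, h3]
    push_cast
    ring
  -- periodicity at the endpoint
  have hFper : tdualF f 0 = tdualF f (n : ℤ) := by
    have hfn : f (n : ℤ) = f 0 + n := by simpa using hper 0
    simp only [tdualF, hfn]
    congr 1
    refine Finset.card_bij' (fun i _ => i + (n : ℤ)) (fun j _ => j - (n : ℤ)) ?_ ?_ ?_ ?_
    · intro i hi
      simp only [Finset.mem_filter, Finset.mem_Icc] at hi ⊢
      refine ⟨⟨by omega, by omega⟩, ?_⟩
      rw [hper i]; omega
    · intro j hj
      simp only [Finset.mem_filter, Finset.mem_Icc] at hj ⊢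
      have h := hper (j - n)
      rw [show j - (n : ℤ) + n = j by ring] at h
      refine ⟨⟨by omega, by omega⟩, by omega⟩
    · intro i _; ring
    · intro j _; ring
  have hn' : (1 : ℤ) ≤ (n : ℤ) := by exact_mod_cast hn
  -- reindex the shifted sum
  have hsum1 : ∑ a ∈ Finset.Icc (1 : ℤ) (n : ℤ), tdualF f (a - 1)
      = ∑ b ∈ Finset.Icc (0 : ℤ) ((n : ℤ) - 1), tdualF f b := by
    rw [show Finset.Icc (1 : ℤ) (n : ℤ)
        = (Finset.Icc (0 : ℤ) ((n : ℤ) - 1)).map (addRightEmbedding 1) by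
      rw [Finset.map_add_right_Icc]; congr 1 <;> ring, Finset.sum_map]
    refine Finset.sum_congr rfl fun b _ => ?_
    have : ((addRightEmbedding (1 : ℤ)) b : ℤ) = b + 1 := rfl
    rw [this, add_sub_cancel_right]
  have hsplit : ∑ b ∈ Finset.Icc (0 : ℤ) ((n : ℤ) - 1), tdualF f b
      = ∑ b ∈ Finset.Icc (1 : ℤ) (n : ℤ), tdualF f b := by
    have e1 : Finset.Icc (0 : ℤ) ((n : ℤ) - 1)
        = insert 0 (Finset.Icc (1 : ℤ) ((n : ℤ) - 1)) := by
      ext x; simp only [Finset.mem_insert, Finset.mem_Icc]; omega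
    have e2 : Finset.Icc (1 : ℤ) (n : ℤ)
        = insert (n : ℤ) (Finset.Icc (1 : ℤ) ((n : ℤ) - 1)) := by
      ext x; simp only [Finset.mem_insert, Finset.mem_Icc]; omega
    rw [e1, e2, Finset.sum_insert (by simp), Finset.sum_insert (by simp [Finset.mem_Icc]), hFper]
  have hcard : ((Finset.Icc (1 : ℤ) (n : ℤ)).card : ℤ) = n := by
    rw [Int.card_Icc]; omega
  have hcell : ∀ (m : ℕ) (g : ℤ → ℤ),
      cellDim n m g = (∑ a ∈ Finset.Icc (1 : ℤ) (n : ℤ), tdualF g a) - (m : ℤ) ^ 2 :=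
    fun m g => rfl
  rw [hcell k (fun i => f (i - 1)), hcell (k + 1) f,
    Finset.sum_congr rfl fun a _ => key a, Finset.sum_sub_distrib, hsum1, hsplit,
    Finset.sum_const, nsmul_eq_mul, mul_one, hcard]
  push_cast
  ring
end
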